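/- arXiv:1504.00783 — 2 statements merged into one kernel-verified Lean document; each statement's English description precedes it below -/
import Mathlib

section
/- For every n ≥ 1 and every Δ ∈ ℂ, the unital complex subalgebra of End((ℂ²)^{⊗n}) ≅ M_{2ⁿ}(ℂ) generated by the three operators H, σ⁺₁ and σ⁻₁ is the whole algebra End((ℂ²)^{⊗n}), where H is the open XXZ Hamiltonian with anisotropy Δ. -/
open Matrix

noncomputable section

abbrev M2 : Type := Matrix (Fin 2) (Fin 2) ℂ

/-- Pauli matrices and raising/lowering operators. -/
def σx : M2 := !![0, 1; 1, 0]
def σy : M2 := !![0, -Complex.I; Complex.I, 0]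
def σz : M2 := !![1, 0; 0, -1]
def σ0 : M2 := 1
def σp : M2 := (1/2 : ℂ) • (σx + Complex.I • σy)
def σm : M2 := (1/2 : ℂ) • (σx - Complex.I • σy)

/-- Operators on the spin chain `(ℂ²)^{⊗n}`. -/
abbrev ChainOp (n : ℕ) : Type := Matrix (Fin n → Fin 2) (Fin n → Fin 2) ℂ

/-- A single-site operator `a` acting at site `x` (identity elsewhere). -/
def site {n : ℕ} (x : Fin n) (a : M2) : ChainOp n :=
  Matrix.of fun i j =>
    a (i x) (j x) * ∏ y ∈ Finset.univ.filter (fun y => y ≠ x), (if i y = j y then (1:ℂ) else 0)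

/-- The open XXZ Hamiltonian `H = Σ_{x=1}^{n-1} h_{x,x+1}` with anisotropy `Δ`. -/
def XXZ (Δ : ℂ) (n : ℕ) : ChainOp n :=
  ∑ x : Fin n,
    if h : (x : ℕ) + 1 < n then
      (2:ℂ) • (site x σp * site ⟨(x:ℕ)+1, h⟩ σm) + (2:ℂ) • (site x σm * site ⟨(x:ℕ)+1, h⟩ σp)
        + Δ • (site x σz * site ⟨(x:ℕ)+1, h⟩ σz)
    else 0

/-!
Induction along the chain. Suppose the algebra contains `σ±` at site `k` and the tail
`R_k = Σ_{x ≥ k} h_{x,x+1}` of the Hamiltonian. Then it contains `σᶻ_k = [σ⁺_k, σ⁻_k]` and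
`[σᶻ_k, R_k] = 4 (σ⁺_k σ⁻_{k+1} - σ⁻_k σ⁺_{k+1})`, since `σᶻ_k` commutes with every bond of `R_k`
but the first. Multiplying this hopping term by `σ±_k` on both sides transports `σ±` to site
`k + 1`, hence `h_{k,k+1}` and `R_{k+1} = R_k - h_{k,k+1}` are in the algebra as well. Once `σ±`
is available at every site, so are all single-site matrix units, and their products are all
matrix units of `(ℂ²)^{⊗n}`.
-/

section PiKron

variable {ι κ R : Type*} [Fintype ι] [CommRing R]

/-- The tensor product `⨂_x f x` of a family of matrices, on the index type `ι → κ`. -/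
def piKron (f : ι → Matrix κ κ R) : Matrix (ι → κ) (ι → κ) R :=
  Matrix.of fun i j => ∏ x, f x (i x) (j x)

lemma piKron_mul [DecidableEq ι] [Fintype κ] (f g : ι → Matrix κ κ R) :
    piKron f * piKron g = piKron (f * g) := by
  ext i j
  simp only [piKron, mul_apply, of_apply, Pi.mul_apply]
  rw [Fintype.prod_sum fun x t => f x (i x) t * g x t (j x)]
  exact Finset.sum_congr rfl fun k _ => Finset.prod_mul_distrib.symm

lemma piKron_single [DecidableEq κ] (i j : ι → κ) :
    piKron (fun x => single (i x) (j x) (1 : R)) = single i j 1 := by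
  ext a b
  simp [piKron, single_apply, Finset.prod_boole, funext_iff, forall_and]

lemma piKron_one [DecidableEq κ] : piKron (1 : ι → Matrix κ κ R) = 1 := by
  ext i j
  simp [piKron, one_apply, Finset.prod_boole, funext_iff]

variable [DecidableEq ι] [Fintype κ] [DecidableEq κ]

lemma piKron_mem_of_mulSingle_mem (A : Subalgebra R (Matrix (ι → κ) (ι → κ) R))
    (f : ι → Matrix κ κ R) (hf : ∀ x, piKron (Pi.mulSingle x (f x)) ∈ A) : piKron f ∈ A := by
  suffices h : ∀ s : Finset ι, piKron (s.piecewise f 1) ∈ A by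
    simpa only [Finset.piecewise_univ] using h Finset.univ
  intro s
  induction s using Finset.induction with
  | empty => simpa only [Finset.piecewise_empty, piKron_one] using A.one_mem
  | insert x s hx ih =>
    have hsplit : (insert x s).piecewise f 1 = Pi.mulSingle x (f x) * s.piecewise f 1 := by
      funext y
      by_cases hy : y = x
      · subst hy; simp [hx]
      · simp [hy]
    rw [hsplit, ← piKron_mul]
    exact A.mul_mem (hf x) ih

lemma eq_top_of_piKron_mulSingle_single_mem
    (A : Subalgebra R (Matrix (ι → κ) (ι → κ) R))
    (h : ∀ x a b, piKron (Pi.mulSingle x (single a b (1 : R))) ∈ A) : A = ⊤ := by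
  refine eq_top_iff.mpr fun m _ => ?_
  rw [matrix_eq_sum_single m]
  refine A.sum_mem fun i _ => A.sum_mem fun j _ => ?_
  rw [← mul_one (m i j), ← smul_eq_mul, ← smul_single, ← piKron_single]
  exact A.smul_mem (piKron_mem_of_mulSingle_mem A _ fun x => h x _ _) _

end PiKron

section Site

variable {n : ℕ}

lemma site_eq_piKron (x : Fin n) (a : M2) : site x a = piKron (Pi.mulSingle x a) := by
  ext i j
  simp only [site, piKron, of_apply]
  rw [← Finset.mul_prod_erase Finset.univ _ (Finset.mem_univ x), Finset.filter_ne']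
  congr 1
  · simp
  · refine Finset.prod_congr rfl fun y hy => ?_
    rw [Pi.mulSingle_eq_of_ne (Finset.ne_of_mem_erase hy), one_apply]

lemma site_one (x : Fin n) : site x 1 = 1 := by
  rw [site_eq_piKron, Pi.mulSingle_one, piKron_one]

lemma site_mul (x : Fin n) (a b : M2) : site x a * site x b = site x (a * b) := by
  rw [site_eq_piKron, site_eq_piKron, site_eq_piKron, piKron_mul, Pi.mulSingle_mul]

lemma site_commute {x y : Fin n} (hxy : x ≠ y) (a b : M2) : Commute (site x a) (site y b) := by
  rw [Commute, SemiconjBy, site_eq_piKron, site_eq_piKron, piKron_mul, piKron_mul]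
  exact congrArg piKron (Pi.mulSingle_commute (f := fun _ => M2) hxy a b).eq

lemma site_zero (x : Fin n) : site x 0 = 0 := by
  ext i j; simp [site]

lemma site_add (x : Fin n) (a b : M2) : site x (a + b) = site x a + site x b := by
  ext i j; simp [site, add_mul]

lemma site_sub (x : Fin n) (a b : M2) : site x (a - b) = site x a - site x b := by
  ext i j; simp [site, sub_mul]

lemma site_neg (x : Fin n) (a : M2) : site x (-a) = -site x a := by
  ext i j; simp [site]

lemma site_smul (x : Fin n) (c : ℂ) (a : M2) : site x (c • a) = c • site x a := by
  ext i j; simp [site, mul_assoc]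

end Site

section Pauli

lemma σp_eq_single : σp = single 0 1 1 := by
  ext i j; fin_cases i <;> fin_cases j <;> simp [σp, σx, σy, Complex.ext_iff]; norm_num

lemma σm_eq_single : σm = single 1 0 1 := by
  ext i j; fin_cases i <;> fin_cases j <;> simp [σm, σx, σy, Complex.ext_iff]; norm_num

lemma σp_mul_σp : σp * σp = 0 := by
  rw [σp_eq_single, single_mul_single_of_ne _ _ _ _ (by decide)]

lemma σm_mul_σm : σm * σm = 0 := by
  rw [σm_eq_single, single_mul_single_of_ne _ _ _ _ (by decide)]

lemma σp_mul_σm : σp * σm = single 0 0 1 := by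
  rw [σp_eq_single, σm_eq_single, single_mul_single_same, mul_one]

lemma σm_mul_σp : σm * σp = single 1 1 1 := by
  rw [σp_eq_single, σm_eq_single, single_mul_single_same, mul_one]

lemma σp_mul_σm_add_σm_mul_σp : σp * σm + σm * σp = 1 := by
  ext i j; fin_cases i <;> fin_cases j <;> simp [σp_eq_single, σm_eq_single]

lemma σz_eq : σz = σp * σm - σm * σp := by
  ext i j; fin_cases i <;> fin_cases j <;> simp [σz, σp_eq_single, σm_eq_single]

lemma σz_mul_σp_sub_σp_mul_σz : σz * σp - σp * σz = (2 : ℂ) • σp := by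
  ext i j
  fin_cases i <;> fin_cases j <;> norm_num [σz, σp_eq_single, vecMul, dotProduct, Fin.sum_univ_two]

lemma σz_mul_σm_sub_σm_mul_σz : σz * σm - σm * σz = -((2 : ℂ) • σm) := by
  ext i j
  fin_cases i <;> fin_cases j <;> norm_num [σz, σm_eq_single, vecMul, dotProduct, Fin.sum_univ_two]

end Pauli

section Chain

variable {n : ℕ}

lemma site_σz_mem {A : Subalgebra ℂ (ChainOp n)} {x : Fin n} (hp : site x σp ∈ A)
    (hm : site x σm ∈ A) : site x σz ∈ A := by
  rw [σz_eq, site_sub, ← site_mul, ← site_mul]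
  exact A.sub_mem (A.mul_mem hp hm) (A.mul_mem hm hp)

lemma eq_top_of_site_mem (A : Subalgebra ℂ (ChainOp n)) (hp : ∀ x, site x σp ∈ A)
    (hm : ∀ x, site x σm ∈ A) : A = ⊤ := by
  refine eq_top_of_piKron_mulSingle_single_mem A fun x a b => ?_
  rw [← site_eq_piKron]
  fin_cases a <;> fin_cases b
  · show site x (single 0 0 1) ∈ A
    rw [← σp_mul_σm, ← site_mul]
    exact A.mul_mem (hp x) (hm x)
  · simpa [← σp_eq_single] using hp x
  · simpa [← σm_eq_single] using hm x
  · show site x (single 1 1 1) ∈ A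
    rw [← σm_mul_σp, ← site_mul]
    exact A.mul_mem (hm x) (hp x)

/-- The bond term `h_{x,y}` of the XXZ chain. -/
def bond (Δ : ℂ) (x y : Fin n) : ChainOp n :=
  (2 : ℂ) • (site x σp * site y σm) + (2 : ℂ) • (site x σm * site y σp)
    + Δ • (site x σz * site y σz)

def hopping (x y : Fin n) : ChainOp n := site x σp * site y σm - site x σm * site y σp

variable {x y : Fin n}

lemma site_mul_site_mul_site (hxy : x ≠ y) (a b c : M2) :
    site x a * site y b * site x c = site x (a * c) * site y b := by
  rw [mul_assoc, (site_commute hxy.symm b c).eq, ← mul_assoc, site_mul]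

lemma site_commutator_site_mul_site (hxy : x ≠ y) (a b c : M2) :
    site x c * (site x a * site y b) - site x a * site y b * site x c
      = site x (c * a - a * c) * site y b := by
  rw [← mul_assoc, site_mul, site_mul_site_mul_site hxy, ← sub_mul, site_sub]

lemma site_σz_commutator_bond (Δ : ℂ) (hxy : x ≠ y) :
    site x σz * bond Δ x y - bond Δ x y * site x σz = (4 : ℂ) • hopping x y := by
  simp only [bond, mul_add, add_mul, mul_smul_comm, smul_mul_assoc, add_sub_add_comm,
    ← smul_sub, site_commutator_site_mul_site hxy, σz_mul_σp_sub_σp_mul_σz, σz_mul_σm_sub_σm_mul_σz, sub_self,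
    site_zero, zero_mul, smul_zero, add_zero, site_smul, site_neg, neg_mul, hopping]
  module

lemma site_σp_eq_hopping (hxy : x ≠ y) :
    site y σp = -(site x σp * hopping x y + hopping x y * site x σp) := by
  rw [hopping, mul_sub, sub_mul, ← mul_assoc, ← mul_assoc, site_mul, site_mul,
    site_mul_site_mul_site hxy, site_mul_site_mul_site hxy, σp_mul_σp, site_zero, zero_mul,
    zero_sub, zero_sub, ← neg_add, ← add_mul, ← site_add, σp_mul_σm_add_σm_mul_σp, site_one,
    one_mul, neg_neg]

lemma site_σm_eq_hopping (hxy : x ≠ y) :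
    site y σm = site x σm * hopping x y + hopping x y * site x σm := by
  rw [hopping, mul_sub, sub_mul, ← mul_assoc, ← mul_assoc, site_mul, site_mul,
    site_mul_site_mul_site hxy, site_mul_site_mul_site hxy, σm_mul_σm, site_zero, zero_mul,
    sub_zero, sub_zero, ← add_mul, ← site_add, add_comm, σp_mul_σm_add_σm_mul_σp, site_one,
    one_mul]

lemma commute_site_bond (Δ : ℂ) {z : Fin n} (hx : z ≠ x) (hy : z ≠ y) (a : M2) :
    Commute (site z a) (bond Δ x y) := by
  have hpair : ∀ b c, Commute (site z a) (site x b * site y c) := fun b c =>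
    (site_commute hx a b).mul_right (site_commute hy a c)
  exact (((hpair _ _).smul_right _).add_right ((hpair _ _).smul_right _)).add_right
    ((hpair _ _).smul_right _)

lemma bond_mem {A : Subalgebra ℂ (ChainOp n)} (Δ : ℂ) (hpx : site x σp ∈ A)
    (hmx : site x σm ∈ A) (hpy : site y σp ∈ A) (hmy : site y σm ∈ A) : bond Δ x y ∈ A := by
  exact A.add_mem (A.add_mem (A.smul_mem (A.mul_mem hpx hmy) _)
    (A.smul_mem (A.mul_mem hmx hpy) _))
    (A.smul_mem (A.mul_mem (site_σz_mem hpx hmx) (site_σz_mem hpy hmy)) _)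

lemma site_mem_of_bond_add_mem {A : Subalgebra ℂ (ChainOp n)} (Δ : ℂ) (hxy : x ≠ y)
    {R : ChainOp n} (hR : Commute (site x σz) R) (hp : site x σp ∈ A) (hm : site x σm ∈ A)
    (hB : bond Δ x y + R ∈ A) : site y σp ∈ A ∧ site y σm ∈ A ∧ R ∈ A := by
  have hz : site x σz ∈ A := site_σz_mem hp hm
  have hcomm : site x σz * (bond Δ x y + R) - (bond Δ x y + R) * site x σz
      = (4 : ℂ) • hopping x y := by
    rw [mul_add, add_mul, hR.eq, add_sub_add_right_eq_sub, site_σz_commutator_bond Δ hxy]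
  have hK : hopping x y ∈ A := by
    have h4 := A.smul_mem (A.sub_mem (A.mul_mem hz hB) (A.mul_mem hB hz)) (4⁻¹ : ℂ)
    rwa [hcomm, smul_smul, inv_mul_cancel₀ (by norm_num), one_smul] at h4
  have hpy : site y σp ∈ A := by
    rw [site_σp_eq_hopping hxy]
    exact A.neg_mem (A.add_mem (A.mul_mem hp hK) (A.mul_mem hK hp))
  have hmy : site y σm ∈ A := by
    rw [site_σm_eq_hopping hxy]
    exact A.add_mem (A.mul_mem hm hK) (A.mul_mem hK hm)
  refine ⟨hpy, hmy, ?_⟩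
  simpa using A.sub_mem hB (bond_mem Δ hp hm hpy hmy)

end Chain

section Tail

variable (Δ : ℂ) {n : ℕ}

def xxzTerm (x : Fin n) : ChainOp n :=
  if h : (x : ℕ) + 1 < n then bond Δ x ⟨x + 1, h⟩ else 0

def xxzTail (n k : ℕ) : ChainOp n :=
  ∑ x ∈ Finset.univ.filter (fun x : Fin n => k ≤ (x : ℕ)), xxzTerm Δ x

lemma XXZ_eq_xxzTail_zero : XXZ Δ n = xxzTail Δ n 0 := by
  simp only [xxzTail, zero_le, Finset.filter_true]
  rfl

lemma xxzTail_eq_bond_add {k : ℕ} (hk : k + 1 < n) :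
    xxzTail Δ n k = bond Δ ⟨k, by omega⟩ ⟨k + 1, hk⟩ + xxzTail Δ n (k + 1) := by
  have hsplit : Finset.univ.filter (fun x : Fin n => k ≤ (x : ℕ))
      = insert ⟨k, by omega⟩ (Finset.univ.filter fun x : Fin n => k + 1 ≤ (x : ℕ)) := by
    ext x
    simp only [Finset.mem_filter, Finset.mem_univ, true_and, Finset.mem_insert, Fin.ext_iff]
    omega
  rw [xxzTail, hsplit, Finset.sum_insert (by simp)]
  simp only [xxzTerm, dif_pos hk, xxzTail]

lemma commute_site_xxzTail {k : ℕ} (hk : k < n) (a : M2) :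
    Commute (site ⟨k, hk⟩ a) (xxzTail Δ n (k + 1)) := by
  refine Commute.sum_right _ _ _ fun x hx => ?_
  have hkx : k + 1 ≤ (x : ℕ) := (Finset.mem_filter.mp hx).2
  unfold xxzTerm
  split_ifs with h
  · exact commute_site_bond Δ (by simp [Fin.ext_iff]; omega) (by simp [Fin.ext_iff]; omega) a
  · exact Commute.zero_right _

lemma eq_top_of_XXZ_mem (A : Subalgebra ℂ (ChainOp n)) (h0 : 0 < n) (hH : XXZ Δ n ∈ A)
    (hp : site ⟨0, h0⟩ σp ∈ A) (hm : site ⟨0, h0⟩ σm ∈ A) : A = ⊤ := by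
  have key : ∀ k (hk : k < n),
      site ⟨k, hk⟩ σp ∈ A ∧ site ⟨k, hk⟩ σm ∈ A ∧ xxzTail Δ n k ∈ A := by
    intro k
    induction k with
    | zero => exact fun _ => ⟨hp, hm, XXZ_eq_xxzTail_zero Δ ▸ hH⟩
    | succ k ih =>
      intro hk
      obtain ⟨hpk, hmk, hR⟩ := ih (by omega)
      rw [xxzTail_eq_bond_add Δ hk] at hR
      exact site_mem_of_bond_add_mem Δ (by simp [Fin.ext_iff]) (commute_site_xxzTail Δ _ _)
        hpk hmk hR
  exact eq_top_of_site_mem A (fun x => (key x x.2).1) (fun x => (key x x.2).2.1)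

end Tail

/-- the unital complex subalgebra generated by `H`, `σ⁺₁`, `σ⁻₁`
is the whole matrix algebra `End((ℂ²)^{⊗n})`. -/
theorem stmt2 (n : ℕ) (hn : 1 ≤ n) (Δ : ℂ) :
    Algebra.adjoin ℂ
      ({XXZ Δ n, site (⟨0, by omega⟩ : Fin n) σp, site (⟨0, by omega⟩ : Fin n) σm} :
        Set (ChainOp n)) = ⊤ :=
  eq_top_of_XXZ_mem Δ _ hn (Algebra.subset_adjoin (by simp)) (Algebra.subset_adjoin (by simp))
    (Algebra.subset_adjoin (by simp))

end
end

section
/- Let n ≥ 2 and let H = Σ_{x=1}^{n−1} (2σ⁺ₓσ⁻_{x+1} + 2σ⁻ₓσ⁺_{x+1} + σᶻₓσᶻ_{x+1}) be the open isotropic Heisenberg (XXX) Hamiltonian on (ℂ²)^{⊗n}. Define Z = Σ_{1 ≤ x < y ≤ n} σ⁺ₓ σ⁻_y. Then [H, Z] = −σᶻ₁ + σᶻₙ. -/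
open Matrix

noncomputable section

/-!
The Hamiltonian is a sum of bond terms `h_{x,x+1}`, each the image of the `4 × 4` matrix
`h = 2 σ⁺ ⊗ σ⁻ + 2 σ⁻ ⊗ σ⁺ + σᶻ ⊗ σᶻ` under the embedding of two-site operators into the chain,
which is an algebra homomorphism. The matrix `h` commutes with `A ⊗ 1 + 1 ⊗ A` for every `A`
(it is `2 · swap - 1`), and `h_{x,x+1}` commutes with operators on the other sites. Expanding
`[h_{x,x+1}, σ⁺_y σ⁻_z]` by the Leibniz rule, the contributions of the sites `x` and `x + 1`
therefore cancel in pairs, except for `y = x`, `z = x + 1`; so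
`[h_{x,x+1}, Z] = [h_{x,x+1}, σ⁺_x σ⁻_{x+1}] = σᶻ_{x+1} - σᶻ_x`, and the sum over the bonds
telescopes.
-/

open scoped Kronecker

attribute [local instance] LieRing.ofAssociativeRing

lemma Fin.sum_dite_add_one_lt_sub {M : Type*} [AddCommGroup M] {n : ℕ} (hn : 0 < n)
    (f : Fin n → M) :
    ∑ x : Fin n, (if h : (x : ℕ) + 1 < n then f ⟨x + 1, h⟩ - f x else 0)
      = f ⟨n - 1, by omega⟩ - f ⟨0, hn⟩ := by
  obtain ⟨m, rfl⟩ : ∃ m, n = m + 1 := ⟨n - 1, by omega⟩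
  let F : ℕ → M := fun k => if h : k < m + 1 then f ⟨k, h⟩ else 0
  have hF : ∀ x : Fin (m + 1), (if h : (x : ℕ) + 1 < m + 1 then f ⟨x + 1, h⟩ - f x else 0)
      = if (x : ℕ) + 1 < m + 1 then F (x + 1) - F x else 0 := by
    intro x
    split_ifs with h
    · simp [F, show (x : ℕ) < m by omega, Nat.le_of_lt_succ x.2]
    · rfl
  rw [Fintype.sum_congr _ _ hF,
    Fin.sum_univ_eq_sum_range (fun k => if k + 1 < m + 1 then F (k + 1) - F k else 0),
    Finset.sum_range_succ, if_neg (lt_irrefl _), add_zero,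
    Finset.sum_congr rfl fun k hk => if_pos (by simpa using Finset.mem_range.mp hk),
    Finset.sum_range_sub]
  simp [F]

section CovBySum

variable {R ι : Type*} [Ring R] [Fintype ι] [LinearOrder ι] {a b : ι}

lemma sum_sum_lt_mul_of_covBy_left (hab : a ⋖ b) {f g : ι → R}
    (hf : ∀ w, w ≠ a → w ≠ b → f w = 0) (hfb : f b = -f a) :
    ∑ y, ∑ z, (if y < z then f y * g z else 0) = f a * g b := by
  have hrow : ∀ y, ∑ z, (if y < z then f y * g z else 0) = f y * ∑ z, if y < z then g z else 0 :=
    fun y => by simp only [Finset.mul_sum, mul_ite, mul_zero]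
  rw [Fintype.sum_eq_add a b hab.ne fun w hw => by rw [hrow, hf w hw.1 hw.2, zero_mul],
    hrow, hrow, hfb, neg_mul, ← sub_eq_add_neg, ← mul_sub, ← Finset.sum_sub_distrib,
    Fintype.sum_eq_single b fun z hz => ?_]
  · simp [hab.lt]
  · simp only [hab.lt_iff_le_right, le_iff_lt_or_eq, hz.symm, or_false, sub_self]

lemma sum_sum_lt_mul_of_covBy_right (hab : a ⋖ b) {f g : ι → R}
    (hg : ∀ w, w ≠ a → w ≠ b → g w = 0) (hga : g a = -g b) :
    ∑ y, ∑ z, (if y < z then f y * g z else 0) = f a * g b := by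
  have hcol : ∀ z, ∑ y, (if y < z then f y * g z else 0) = (∑ y, if y < z then f y else 0) * g z :=
    fun z => by simp only [Finset.sum_mul, ite_mul, zero_mul]
  rw [Finset.sum_comm,
    Fintype.sum_eq_add a b hab.ne fun w hw => by rw [hcol, hg w hw.1 hw.2, mul_zero],
    hcol, hcol, hga, mul_neg, neg_add_eq_sub, ← sub_mul, ← Finset.sum_sub_distrib,
    Fintype.sum_eq_single a fun y hy => ?_]
  · simp [hab.lt]
  · simp only [hab.lt_iff_le_left, le_iff_lt_or_eq, hy, or_false, sub_self]

theorem lie_sum_sum_lt_mul_of_covBy (hab : a ⋖ b) {h : R} {p m : ι → R}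
    (hp : ∀ w, w ≠ a → w ≠ b → Commute h (p w)) (hpab : Commute h (p a + p b))
    (hm : ∀ w, w ≠ a → w ≠ b → Commute h (m w)) (hmab : Commute h (m a + m b)) :
    ⁅h, ∑ y, ∑ z, if y < z then p y * m z else 0⁆ = ⁅h, p a * m b⁆ := by
  have leibniz : ∀ q r : R, ⁅h, q * r⁆ = ⁅h, q⁆ * r + q * ⁅h, r⁆ := fun q r => by
    simp only [Ring.lie_def]; noncomm_ring
  simp only [commute_iff_lie_eq, lie_add] at hp hpab hm hmab
  simp only [lie_sum, apply_ite (⁅h, ·⁆), lie_zero, leibniz, ite_add_zero, Finset.sum_add_distrib]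
  rw [sum_sum_lt_mul_of_covBy_left hab hp (eq_neg_of_add_eq_zero_right hpab),
    sum_sum_lt_mul_of_covBy_right hab hm (eq_neg_of_add_eq_zero_left hmab)]

end CovBySum

lemma σp_eq : σp = !![0, 1; 0, 0] := by
  ext i j; fin_cases i <;> fin_cases j <;> norm_num [σp, σx, σy]

lemma σm_eq : σm = !![0, 0; 1, 0] := by
  ext i j; fin_cases i <;> fin_cases j <;> norm_num [σm, σx, σy]

namespace ChainOp

variable {n : ℕ}

abbrev PairOp : Type := Matrix (Fin 2 × Fin 2) (Fin 2 × Fin 2) ℂ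

def twoSite (x y : Fin n) (X : PairOp) : ChainOp n :=
  Matrix.of fun i j => if ∀ w, w ≠ x → w ≠ y → i w = j w then X (i x, i y) (j x, j y) else 0

lemma funext_of_eq_off {α : Type*} {x y : Fin n} {f g : Fin n → α}
    (h : ∀ w, w ≠ x → w ≠ y → f w = g w) (hx : f x = g x) (hy : f y = g y) : f = g := by
  funext w
  by_cases hwx : w = x
  · exact hwx ▸ hx
  by_cases hwy : w = y
  · exact hwy ▸ hy
  exact h w hwx hwy

lemma twoSite_mul {x y : Fin n} (hxy : x ≠ y) (X Y : PairOp) :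
    twoSite x y X * twoSite x y Y = twoSite x y (X * Y) := by
  ext i j
  simp only [twoSite, mul_apply, of_apply]
  by_cases hij : ∀ w, w ≠ x → w ≠ y → i w = j w
  · rw [if_pos hij]
    -- only configurations agreeing with `i` off `{x, y}` contribute to the matrix product
    let e : Fin 2 × Fin 2 → (Fin n → Fin 2) := fun pq =>
      Function.update (Function.update i x pq.1) y pq.2
    have he_x : ∀ pq, e pq x = pq.1 := fun pq => by simp [e, hxy]
    have he_y : ∀ pq, e pq y = pq.2 := fun pq => by simp [e]
    have he_w : ∀ pq w, w ≠ x → w ≠ y → e pq w = i w := fun pq w hx hy => by simp [e, hx, hy]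
    have he : Function.Injective e := fun pq pq' h => by
      rw [Prod.ext_iff, ← he_x pq, ← he_y pq, ← he_x pq', ← he_y pq', h]
      exact ⟨rfl, rfl⟩
    refine (Fintype.sum_of_injective e he _ _ (fun k hk => ?_) (fun pq => ?_)).symm
    · rw [if_neg fun hik => hk ⟨(k x, k y), funext_of_eq_off
        (fun w hx hy => (he_w _ w hx hy).trans (hik w hx hy)) (he_x _) (he_y _)⟩, zero_mul]
    · have hie : ∀ w, w ≠ x → w ≠ y → i w = e pq w := fun w hx hy => (he_w pq w hx hy).symm
      have hej : ∀ w, w ≠ x → w ≠ y → e pq w = j w := fun w hx hy =>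
        (he_w pq w hx hy).trans (hij w hx hy)
      simp only [if_pos hie, if_pos hej, he_x, he_y]
  · rw [if_neg hij]
    refine Finset.sum_eq_zero fun k _ => ?_
    split_ifs with hik hkj
    · exact absurd (fun w hx hy => (hik w hx hy).trans (hkj w hx hy)) hij
    all_goals simp

lemma twoSite_one (x y : Fin n) : twoSite x y 1 = 1 := by
  ext i j
  by_cases hij : i = j
  · subst hij; simp [twoSite]
  · simp only [twoSite, of_apply, one_apply, Prod.mk.injEq, if_neg hij]
    split_ifs with h h'
    · exact absurd (funext_of_eq_off h h'.1 h'.2) hij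
    all_goals rfl

def twoSiteAlgHom {x y : Fin n} (hxy : x ≠ y) : PairOp →ₐ[ℂ] ChainOp n :=
  AlgHom.ofLinearMap
    { toFun := twoSite x y
      map_add' := fun X Y => by
        ext i j; simp only [twoSite, of_apply, Matrix.add_apply]; split_ifs <;> simp
      map_smul' := fun c X => by
        ext i j; simp only [twoSite, of_apply, Matrix.smul_apply]; split_ifs <;> simp }
    (twoSite_one x y) (fun X Y => (twoSite_mul hxy X Y).symm)

lemma twoSiteAlgHom_apply {x y : Fin n} (hxy : x ≠ y) (X : PairOp) :
    twoSiteAlgHom hxy X = twoSite x y X := rfl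

lemma site_apply_of_ne {x y : Fin n} (hxy : x ≠ y) (A : M2) (i j : Fin n → Fin 2) :
    site x A i j = if ∀ w, w ≠ x → w ≠ y → i w = j w then
      A (i x) (j x) * (if i y = j y then 1 else 0) else 0 := by
  have hagree : (∀ w ∈ Finset.univ.filter (· ≠ x), i w = j w) ↔
      (∀ w, w ≠ x → w ≠ y → i w = j w) ∧ i y = j y := by
    simp only [Finset.mem_filter, Finset.mem_univ, true_and]
    refine ⟨fun h => ⟨fun w hx _ => h w hx, h y hxy.symm⟩, fun ⟨h, hy⟩ w hx => ?_⟩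
    by_cases hw : w = y
    · exact hw ▸ hy
    · exact h w hx hw
  simp only [site, of_apply, Finset.prod_boole, hagree]
  split_ifs <;> simp_all

lemma site_eq_twoSite_left {x y : Fin n} (hxy : x ≠ y) (A : M2) :
    site x A = twoSite x y (A ⊗ₖ 1) := by
  ext i j
  simp [site_apply_of_ne hxy, twoSite, one_apply]

lemma site_eq_twoSite_right {x y : Fin n} (hxy : x ≠ y) (B : M2) :
    site y B = twoSite x y (1 ⊗ₖ B) := by
  ext i j
  simp [site_apply_of_ne hxy.symm, twoSite, one_apply, imp.swap (a := _ ≠ y), mul_comm]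

lemma site_mul_site {x y : Fin n} (hxy : x ≠ y) (A B : M2) :
    site x A * site y B = twoSite x y (A ⊗ₖ B) := by
  rw [site_eq_twoSite_left hxy, site_eq_twoSite_right hxy, twoSite_mul hxy, ← mul_kronecker_mul,
    mul_one, one_mul]

lemma site_commute {x y : Fin n} (hxy : x ≠ y) (A B : M2) : Commute (site x A) (site y B) := by
  rw [Commute, SemiconjBy, site_mul_site hxy, site_eq_twoSite_left hxy, site_eq_twoSite_right hxy,
    twoSite_mul hxy, ← mul_kronecker_mul, mul_one, one_mul]

def heisenbergPair : PairOp := (2 : ℂ) • σp ⊗ₖ σm + (2 : ℂ) • σm ⊗ₖ σp + σz ⊗ₖ σz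

lemma heisenbergPair_commute (A : M2) : Commute heisenbergPair (A ⊗ₖ 1 + 1 ⊗ₖ A) := by
  ext ⟨a, b⟩ ⟨c, d⟩
  fin_cases a <;> fin_cases b <;> fin_cases c <;> fin_cases d <;>
    simp [heisenbergPair, σp_eq, σm_eq, σz, mul_apply, Fintype.sum_prod_type, one_apply] <;> ring

lemma heisenbergPair_lie : ⁅heisenbergPair, σp ⊗ₖ σm⁆ = 1 ⊗ₖ σz - σz ⊗ₖ 1 := by
  rw [Ring.lie_def]
  ext ⟨a, b⟩ ⟨c, d⟩
  fin_cases a <;> fin_cases b <;> fin_cases c <;> fin_cases d <;>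
    simp [heisenbergPair, σp_eq, σm_eq, σz, mul_apply, Fintype.sum_prod_type, one_apply] <;> ring

lemma twoSite_heisenbergPair {x y : Fin n} (hxy : x ≠ y) :
    twoSite x y heisenbergPair = (2 : ℂ) • (site x σp * site y σm)
      + (2 : ℂ) • (site x σm * site y σp) + site x σz * site y σz := by
  simp only [site_mul_site hxy, ← twoSiteAlgHom_apply hxy, heisenbergPair, map_add, map_smul]

lemma XXZ_one_eq_sum_twoSite :
    XXZ 1 n = ∑ x : Fin n,
      if h : (x : ℕ) + 1 < n then twoSite x ⟨x + 1, h⟩ heisenbergPair else 0 := by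
  refine Fintype.sum_congr _ _ fun x => ?_
  split_ifs with h
  · rw [twoSite_heisenbergPair (Fin.ne_of_lt (Fin.mk_lt_mk.2 (Nat.lt_add_one _))), one_smul]
  · rfl

lemma twoSite_heisenbergPair_commute_site {x y w : Fin n} (hxy : x ≠ y) (hwx : w ≠ x)
    (hwy : w ≠ y) (A : M2) : Commute (twoSite x y heisenbergPair) (site w A) := by
  have hpair : ∀ B C, Commute (site x B * site y C) (site w A) := fun B C =>
    (site_commute hwx.symm B A).mul_left (site_commute hwy.symm C A)
  rw [twoSite_heisenbergPair hxy]
  exact (((hpair _ _).smul_left _).add_left ((hpair _ _).smul_left _)).add_left (hpair _ _)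

lemma twoSite_heisenbergPair_commute_site_add {x y : Fin n} (hxy : x ≠ y) (A : M2) :
    Commute (twoSite x y heisenbergPair) (site x A + site y A) := by
  rw [site_eq_twoSite_left hxy, site_eq_twoSite_right hxy, ← twoSiteAlgHom_apply hxy,
    ← twoSiteAlgHom_apply hxy, ← twoSiteAlgHom_apply hxy, ← map_add]
  exact (heisenbergPair_commute A).map _

lemma twoSite_heisenbergPair_lie_site_mul_site {x y : Fin n} (hxy : x ≠ y) :
    ⁅twoSite x y heisenbergPair, site x σp * site y σm⁆ = site y σz - site x σz := by
  rw [site_mul_site hxy, site_eq_twoSite_left hxy, site_eq_twoSite_right hxy,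
    ← twoSiteAlgHom_apply hxy, ← twoSiteAlgHom_apply hxy, ← twoSiteAlgHom_apply hxy,
    ← twoSiteAlgHom_apply hxy, Ring.lie_def, ← map_mul, ← map_mul, ← map_sub, ← Ring.lie_def,
    heisenbergPair_lie, map_sub]

theorem twoSite_heisenbergPair_lie_sum {x y : Fin n} (hxy : x ⋖ y) :
    ⁅twoSite x y heisenbergPair, ∑ a : Fin n, ∑ b : Fin n,
      if a < b then site a σp * site b σm else 0⁆ = site y σz - site x σz := by
  rw [lie_sum_sum_lt_mul_of_covBy hxy
      (fun w hwx hwy => twoSite_heisenbergPair_commute_site hxy.ne hwx hwy σp)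
      (twoSite_heisenbergPair_commute_site_add hxy.ne σp)
      (fun w hwx hwy => twoSite_heisenbergPair_commute_site hxy.ne hwx hwy σm)
      (twoSite_heisenbergPair_commute_site_add hxy.ne σm),
    twoSite_heisenbergPair_lie_site_mul_site hxy.ne]

end ChainOp

open ChainOp in
/-- for the open XXX chain (`Δ = 1`), the operator
`Z = Σ_{x<y} σ⁺ₓ σ⁻_y` satisfies `[H,Z] = −σᶻ₁ + σᶻₙ`. -/
theorem stmt12 (n : ℕ) (hn : 2 ≤ n)
    (Z : ChainOp n)
    (hZ : Z = ∑ x : Fin n, ∑ y : Fin n, if x < y then site x σp * site y σm else 0) :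
    XXZ 1 n * Z - Z * XXZ 1 n
      = -(site (⟨0, by omega⟩ : Fin n) σz) + site (⟨n-1, by omega⟩ : Fin n) σz := by
  subst hZ
  have hbond : ∀ x : Fin n,
      ⁅if h : (x : ℕ) + 1 < n then twoSite x ⟨x + 1, h⟩ heisenbergPair else 0,
        ∑ a : Fin n, ∑ b : Fin n, if a < b then site a σp * site b σm else 0⁆
      = if h : (x : ℕ) + 1 < n then site ⟨x + 1, h⟩ σz - site x σz else 0 := fun x => by
    split_ifs with h
    · exact twoSite_heisenbergPair_lie_sum (Fin.covBy_iff.2 (Order.covBy_add_one _))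
    · exact zero_lie _
  rw [← Ring.lie_def, XXZ_one_eq_sum_twoSite, sum_lie, Fintype.sum_congr _ _ hbond,
    Fin.sum_dite_add_one_lt_sub (by omega) (site · σz), neg_add_eq_sub]

end
end
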